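/- Let G be a bridgeless cubic graph, let {e1, e2} be a 2-edge-cut of G with components H1, H2 of G − {e1, e2}, and let G1 = H1 + e'1 and G2 = H2 + e'2 be the graphs obtained by the {e1, e2}-reduction. Suppose {f1, f2, f3} is a 3-edge-cut of G with f1, f2 ∈ E(H1) and f3 ∈ E(H2). Then {f3, e'2} is a 2-edge-cut of G2 and {f1, f2, e'1} is a 3-edge-cut of G1. -/

import Mathlib

open SimpleGraph

/-- A graph is cubic if every vertex has degree `3`. -/
def IsCubic {V : Type*} (G : SimpleGraph V) : Prop :=
  ∀ v : V, (G.neighborSet v).ncard = 3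

/-- A graph is bridgeless if it has no bridge. -/
def Bridgeless {V : Type*} (G : SimpleGraph V) : Prop :=
  ∀ e : Sym2 V, ¬ G.IsBridge e

/-- `S` is a set of edges of `G` whose deletion disconnects `G`. -/
def IsDisconnectingSet {V : Type*} (G : SimpleGraph V) (S : Set (Sym2 V)) : Prop :=
  S ⊆ G.edgeSet ∧ ¬ (G.deleteEdges S).Connected

/-- A `k`-edge-cut: an inclusion-minimal set of `k` edges whose deletion disconnects `G`. -/
def IsKEdgeCut {V : Type*} (G : SimpleGraph V) (k : ℕ) (S : Set (Sym2 V)) : Prop :=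
  S.ncard = k ∧ IsDisconnectingSet G S ∧ ∀ T : Set (Sym2 V), T ⊂ S → ¬ IsDisconnectingSet G T

/-- A perfect matching of `G`, as a set of edges such that every vertex is incident with
exactly one edge of the set. -/
def IsPerfectMatchingSet {V : Type*} (G : SimpleGraph V) (M : Set (Sym2 V)) : Prop :=
  M ⊆ G.edgeSet ∧ ∀ v : V, ∃! e : Sym2 V, e ∈ M ∧ v ∈ e

/-- A well-spread perfect matching: a perfect matching containing exactly one edge of every
`3`-edge-cut. -/
def IsWellSpreadPM {V : Type*} (G : SimpleGraph V) (M : Set (Sym2 V)) : Prop :=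
  IsPerfectMatchingSet G M ∧ ∀ C : Set (Sym2 V), IsKEdgeCut G 3 C → (M ∩ C).ncard = 1

/-- A graph is `3`-edge-connected if it is connected, has at least two vertices, and stays
connected after deleting any set of fewer than `3` edges. -/
def ThreeEdgeConnected {V : Type*} [Fintype V] (G : SimpleGraph V) : Prop :=
  G.Connected ∧ 1 < Fintype.card V ∧
    ∀ S : Set (Sym2 V), S.ncard < 3 → (G.deleteEdges S).Connected

/-! Let `F = {f1, f2, f3}` and let `S` be one side of the 2-edge-cut, with the reduction edge
`w1w2` added and `E` the edges of `F` inside `S` (`{f1, f2}` or `{f3}`). In `K = G[S] - E`, every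
vertex is joined to `w1` or to `w2`: otherwise the `K`-component of the vertex would be cut off
from the rest of `G` by `E` alone, a proper subset of the minimal cut `F`. On the other hand the
two ends of an edge of `F` are separated in `G - F ⊇ K`. Hence `K` has exactly the two components
of `w1` and `w2`, the new edge `w1w2` and every edge of `E` join them, and so `E ∪ {w1w2}` is a
minimal disconnecting set of `G[S] + w1w2`. -/

section

variable {V : Type*}

namespace SimpleGraph

lemma Reachable.of_forall_adj_reachable {A B : SimpleGraph V}
    (hAB : ∀ a b, A.Adj a b → B.Reachable a b) {u v : V} (h : A.Reachable u v) :
    B.Reachable u v := by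
  rw [reachable_iff_reflTransGen] at h ⊢
  exact h.lift' id fun a b hab => (reachable_iff_reflTransGen a b).1 (hAB a b hab)

lemma Connected.of_forall_adj_reachable {A B : SimpleGraph V}
    (hAB : ∀ a b, A.Adj a b → B.Reachable a b) (h : A.Connected) : B.Connected :=
  (connected_iff B).2
    ⟨fun u v => (h.preconnected u v).of_forall_adj_reachable hAB, h.nonempty⟩

lemma mem_of_adj_of_reachable_deleteEdges {G : SimpleGraph V} {X : Set (Sym2 V)} {u a b : V}
    (ha : (G.deleteEdges X).Reachable u a) (hb : ¬ (G.deleteEdges X).Reachable u b)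
    (hab : G.Adj a b) : s(a, b) ∈ X := by
  by_contra h
  exact hb (ha.trans (deleteEdges_adj.2 ⟨hab, h⟩).reachable)

lemma not_reachable_deleteEdges_of_boundary_subset {G : SimpleGraph V} {T : Set (Sym2 V)}
    {C : Set V} (hT : ∀ a ∈ C, ∀ b ∉ C, G.Adj a b → s(a, b) ∈ T) {x y : V} (hx : x ∈ C)
    (hy : y ∉ C) : ¬ (G.deleteEdges T).Reachable x y := by
  rintro ⟨p⟩
  obtain ⟨d, -, hd₁, hd₂⟩ := p.exists_boundary_dart C hx hy
  obtain ⟨hadj, hnot⟩ := deleteEdges_adj.1 d.adj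
  exact hnot (hT _ hd₁ _ hd₂ hadj)

lemma connected_of_le_of_reachable_or_reachable {K B : SimpleGraph V} {w₁ w₂ : V}
    (hKB : K ≤ B) (hgate : ∀ z, K.Reachable z w₁ ∨ K.Reachable z w₂) (hw : B.Reachable w₁ w₂) :
    B.Connected := by
  have hz : ∀ z, B.Reachable z w₁ := fun z =>
    (hgate z).elim (·.mono hKB) fun h => (h.mono hKB).trans hw.symm
  exact (connected_iff B).2 ⟨fun x y => (hz x).trans (hz y).symm, ⟨w₁⟩⟩

lemma deleteEdges_sup_edge_union_singleton {H : SimpleGraph V} {E : Set (Sym2 V)}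
    {w₁ w₂ : V} (hnadj : ¬ H.Adj w₁ w₂) :
    (H ⊔ edge w₁ w₂).deleteEdges (E ∪ {s(w₁, w₂)}) = H.deleteEdges E := by
  ext a b
  simp only [deleteEdges_adj, sup_adj, adj_edge, Set.mem_union, Set.mem_singleton_iff]
  constructor
  · rintro ⟨hab | ⟨he, -⟩, hnot⟩
    exacts [⟨hab, fun h => hnot (Or.inl h)⟩, (hnot (Or.inr he.symm)).elim]
  · rintro ⟨hab, hnot⟩
    refine ⟨Or.inl hab, fun h => h.elim hnot fun he => hnadj ?_⟩
    rw [← mem_edgeSet, ← he]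
    exact hab

lemma reachable_of_reachable_or_reachable_of_adj {K B : SimpleGraph V}
    {w₁ w₂ c d : V} (hKB : K ≤ B) (hgate : ∀ z, K.Reachable z w₁ ∨ K.Reachable z w₂)
    (hcd : B.Adj c d) (hsep : ¬ K.Reachable c d) : B.Reachable w₁ w₂ := by
  rcases hgate c with hc | hc <;> rcases hgate d with hd | hd
  · exact (hsep (hc.trans hd.symm)).elim
  · exact ((hc.mono hKB).symm.trans hcd.reachable).trans (hd.mono hKB)
  · exact ((hd.mono hKB).symm.trans hcd.reachable.symm).trans (hc.mono hKB)
  · exact (hsep (hc.trans hd.symm)).elim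

end SimpleGraph

lemma IsKEdgeCut.connected_deleteEdges_of_ssubset {G : SimpleGraph V} {k : ℕ}
    {S T : Set (Sym2 V)} (h : IsKEdgeCut G k S) (hT : T ⊂ S) : (G.deleteEdges T).Connected := by
  by_contra hc
  exact h.2.2 T hT ⟨hT.subset.trans h.2.1.1, hc⟩

lemma IsKEdgeCut.not_reachable_deleteEdges {G : SimpleGraph V} {k : ℕ} {S : Set (Sym2 V)}
    (h : IsKEdgeCut G k S) {c d : V} (hcd : s(c, d) ∈ S) : ¬ (G.deleteEdges S).Reachable c d := by
  intro hr
  refine h.2.1.2 ((h.connected_deleteEdges_of_ssubset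
    (Set.sdiff_singleton_ssubset.2 hcd)).of_forall_adj_reachable fun a b hab => ?_)
  obtain ⟨hGab, hab⟩ := deleteEdges_adj.1 hab
  by_cases he : s(a, b) = s(c, d)
  · rcases Sym2.eq_iff.1 he with ⟨rfl, rfl⟩ | ⟨rfl, rfl⟩
    exacts [hr, hr.symm]
  · exact (deleteEdges_adj.2 ⟨hGab, fun hS => hab ⟨hS, he⟩⟩).reachable

lemma isKEdgeCut_of_forall_connected_deleteEdges_diff {G : SimpleGraph V} {k : ℕ}
    {S : Set (Sym2 V)} (hcard : S.ncard = k) (hsub : S ⊆ G.edgeSet)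
    (hdis : ¬ (G.deleteEdges S).Connected)
    (hmin : ∀ x ∈ S, (G.deleteEdges (S \ {x})).Connected) : IsKEdgeCut G k S := by
  refine ⟨hcard, ⟨hsub, hdis⟩, fun T hT hT' => hT'.2 ?_⟩
  obtain ⟨x, hxS, hxT⟩ := Set.exists_of_ssubset hT
  exact (hmin x hxS).mono (deleteEdges_anti (Set.subset_sdiff_singleton hT.subset hxT))

lemma isKEdgeCut_sup_edge {H : SimpleGraph V} {E : Set (Sym2 V)} {w₁ w₂ : V}
    (hEfin : E.Finite) (hE : E.Nonempty) (hEH : E ⊆ H.edgeSet) (hw : w₁ ≠ w₂)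
    (hnadj : ¬ H.Adj w₁ w₂)
    (hgate : ∀ z, (H.deleteEdges E).Reachable z w₁ ∨ (H.deleteEdges E).Reachable z w₂)
    (hsep : ∀ c d, s(c, d) ∈ E → ¬ (H.deleteEdges E).Reachable c d) :
    IsKEdgeCut (H ⊔ edge w₁ w₂) (E.ncard + 1) (E ∪ {s(w₁, w₂)}) := by
  have hK := deleteEdges_sup_edge_union_singleton (E := E) hnadj
  have hnew : (H ⊔ edge w₁ w₂).Adj w₁ w₂ := Or.inr ((edge_adj _ _ _ _).2 ⟨Or.inl ⟨rfl, rfl⟩, hw⟩)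
  refine isKEdgeCut_of_forall_connected_deleteEdges_diff ?_ ?_ ?_ fun x hx => ?_
  · rw [Set.union_singleton, Set.ncard_insert_of_notMem (fun h => hnadj (hEH h)) hEfin]
  · rintro e (he | rfl)
    exacts [edgeSet_mono le_sup_left (hEH he), hnew]
  · obtain ⟨e, he⟩ := hE
    induction e using Sym2.ind with
    | h c d => exact fun hc => hsep c d he (hK ▸ hc.preconnected c d)
  have hle : H.deleteEdges E ≤ (H ⊔ edge w₁ w₂).deleteEdges ((E ∪ {s(w₁, w₂)}) \ {x}) :=
    hK ▸ deleteEdges_anti Set.sdiff_subset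
  refine connected_of_le_of_reachable_or_reachable hle hgate ?_
  rcases hx with hx | rfl
  · induction x using Sym2.ind with
    | h c d =>
      exact reachable_of_reachable_or_reachable_of_adj hle hgate
        (deleteEdges_adj.2 ⟨Or.inl (hEH hx), fun h => h.2 rfl⟩) (hsep c d hx)
  · exact (deleteEdges_adj.2 ⟨hnew, fun h => h.2 rfl⟩).reachable

lemma Sym2.map_val_ne_map_val_of_disjoint {S S' : Set V} (h : Disjoint S S') (e : Sym2 S)
    (e' : Sym2 S') : e.map Subtype.val ≠ e'.map Subtype.val := by
  induction e using Sym2.ind with | h a b =>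
  induction e' using Sym2.ind with | h c d =>
  rw [Sym2.map_mk, Sym2.map_mk, ne_eq, Sym2.eq_iff]
  rintro (⟨hac, -⟩ | ⟨had, -⟩)
  exacts [h.ne_of_mem a.2 c.2 hac, h.ne_of_mem a.2 d.2 had]

lemma reachable_or_reachable_deleteEdges_induce {G : SimpleGraph V} {S : Set V}
    {E : Set (Sym2 S)} (hconn : (G.deleteEdges (Sym2.map Subtype.val '' E)).Connected)
    {v : V} (hv : v ∉ S) {w₁ w₂ : S} (hcross : ∀ a : S, ∀ b ∉ S, G.Adj a b → a = w₁ ∨ a = w₂)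
    (z : S) : ((G.induce S).deleteEdges E).Reachable z w₁ ∨
      ((G.induce S).deleteEdges E).Reachable z w₂ := by
  set K := (G.induce S).deleteEdges E
  by_contra! hz
  refine not_reachable_deleteEdges_of_boundary_subset (C := Subtype.val '' {x | K.Reachable z x})
    ?_ ⟨z, Reachable.refl _, rfl⟩ (fun ⟨x, _, hx⟩ => hv (hx ▸ x.2)) (hconn.preconnected z v)
  rintro _ ⟨a, ha, rfl⟩ b hb hab
  by_cases hbS : b ∈ S
  · refine ⟨s(a, ⟨b, hbS⟩), ?_, Sym2.map_mk _ _ _⟩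
    by_contra hnot
    have hK : K.Adj a ⟨b, hbS⟩ := deleteEdges_adj.2 ⟨hab, hnot⟩
    exact hb ⟨⟨b, hbS⟩, ha.trans hK.reachable, rfl⟩
  · rcases hcross a b hbS hab with rfl | rfl
    exacts [(hz.1 ha).elim, (hz.2 ha).elim]

lemma IsKEdgeCut.isKEdgeCut_induce_sup_edge {G : SimpleGraph V} {k : ℕ} {S S' : Set V}
    (hSS' : Disjoint S S') {E : Set (Sym2 S)} {E' : Set (Sym2 S')}
    (hcut : IsKEdgeCut G k (Sym2.map Subtype.val '' E ∪ Sym2.map Subtype.val '' E'))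
    (hEfin : E.Finite) (hE : E.Nonempty) (hE' : E'.Nonempty) {w₁ w₂ : S} (hw : w₁ ≠ w₂)
    (hnadj : ¬ G.Adj w₁ w₂) (hcross : ∀ a : S, ∀ b ∉ S, G.Adj a b → a = w₁ ∨ a = w₂) :
    IsKEdgeCut (G.induce S ⊔ edge w₁ w₂) (E.ncard + 1) (E ∪ {s(w₁, w₂)}) := by
  set F := Sym2.map Subtype.val '' E ∪ Sym2.map Subtype.val '' E'
  obtain ⟨e', he'⟩ := hE'
  have hEF : Sym2.map Subtype.val '' E ⊂ F := by
    refine (Set.ssubset_iff_of_subset Set.subset_union_left).2 ⟨_, Or.inr ⟨e', he', rfl⟩, ?_⟩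
    rintro ⟨e, -, he⟩
    exact Sym2.map_val_ne_map_val_of_disjoint hSS' e e' he
  have hFE : ∀ a b : S, s((a : V), b) ∈ F → s(a, b) ∈ E := by
    rintro a b (⟨e, he, hab⟩ | ⟨e, -, hab⟩)
    · rwa [← Sym2.map.injective Subtype.val_injective (hab.trans (Sym2.map_mk _ a b).symm)]
    · exact (Sym2.map_val_ne_map_val_of_disjoint hSS' s(a, b) e (hab ▸ Sym2.map_mk _ _ _)).elim
  have hEH : E ⊆ (G.induce S).edgeSet := fun e he => by
    induction e using Sym2.ind with
    | h a b => exact hcut.2.1.1 (Or.inl ⟨_, he, Sym2.map_mk _ _ _⟩)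
  let φ : (G.induce S).deleteEdges E →g G.deleteEdges F := ⟨Subtype.val, fun {a b} h =>
    deleteEdges_adj.2 ⟨(deleteEdges_adj.1 h).1, fun hF => (deleteEdges_adj.1 h).2 (hFE a b hF)⟩⟩
  induction e' using Sym2.ind with | h v _ =>
  refine isKEdgeCut_sup_edge hEfin hE hEH hw hnadj
    (reachable_or_reachable_deleteEdges_induce (hcut.connected_deleteEdges_of_ssubset hEF)
      (Set.disjoint_right.1 hSS' v.2) hcross)
    fun c d hcd hr =>
      hcut.not_reachable_deleteEdges (Or.inl ⟨_, hcd, Sym2.map_mk _ _ _⟩) (hr.map φ :)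

end

theorem reduction_split_three_cut_general {V : Type*} (G : SimpleGraph V)
    (u1 v1 u2 v2 : V)
    (S1 S2 : Set V)
    (hS1 : S1 = {x | (G.deleteEdges {s(u1, v1), s(u2, v2)}).Reachable u1 x})
    (hu1 : u1 ∈ S1) (hu2 : u2 ∈ S1) (hv1 : v1 ∈ S2) (hv2 : v2 ∈ S2)
    (hUnion : S1 ∪ S2 = Set.univ) (hDisj : Disjoint S1 S2)
    (huu : u1 ≠ u2) (hvv : v1 ≠ v2)
    (hnadj1 : ¬ G.Adj u1 u2) (hnadj2 : ¬ G.Adj v1 v2)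
    (f1 f2 : Sym2 ↥S1) (f3 : Sym2 ↥S2)
    (hcut3 : IsKEdgeCut G 3 {f1.map Subtype.val, f2.map Subtype.val, f3.map Subtype.val}) :
    ∀ (G1 : SimpleGraph ↥S1) (G2 : SimpleGraph ↥S2),
      G1 = G.induce S1 ⊔ fromEdgeSet {s((⟨u1, hu1⟩ : ↥S1), (⟨u2, hu2⟩ : ↥S1))} →
      G2 = G.induce S2 ⊔ fromEdgeSet {s((⟨v1, hv1⟩ : ↥S2), (⟨v2, hv2⟩ : ↥S2))} →
      IsKEdgeCut G2 2 {f3, s((⟨v1, hv1⟩ : ↥S2), (⟨v2, hv2⟩ : ↥S2))} ∧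
      IsKEdgeCut G1 3 {f1, f2, s((⟨u1, hu1⟩ : ↥S1), (⟨u2, hu2⟩ : ↥S1))} := by
  rintro G1 G2 rfl rfl
  have hf12 : f1 ≠ f2 := by
    rintro rfl
    have h := Set.ncard_insert_le (f1.map Subtype.val) {f3.map Subtype.val}
    rw [← Set.insert_idem, hcut3.1, Set.ncard_singleton] at h
    omega
  have hcross : ∀ a ∈ S1, ∀ b ∉ S1, G.Adj a b → a = u1 ∧ b = v1 ∨ a = u2 ∧ b = v2 := by
    intro a ha b hb hab
    subst hS1
    have h := mem_of_adj_of_reachable_deleteEdges ha hb hab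
    simp only [Set.mem_insert_iff, Set.mem_singleton_iff, Sym2.eq_iff] at h
    rcases h with (h | ⟨-, rfl⟩) | (h | ⟨-, rfl⟩)
    exacts [Or.inl h, (hb hu1).elim, Or.inr h, (hb hu2).elim]
  rw [show ({f1.map Subtype.val, f2.map Subtype.val, f3.map Subtype.val} : Set (Sym2 V)) =
      Sym2.map Subtype.val '' {f1, f2} ∪ Sym2.map Subtype.val '' {f3} by
    simp only [Set.image_insert_eq, Set.image_singleton, Set.insert_union,
      Set.singleton_union]] at hcut3
  have h1 := hcut3.isKEdgeCut_induce_sup_edge hDisj (Set.toFinite _) (Set.insert_nonempty _ _)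
    (Set.singleton_nonempty _) (w₁ := ⟨u1, hu1⟩) (w₂ := ⟨u2, hu2⟩)
    (fun h => huu (congrArg Subtype.val h)) hnadj1
    fun a b hb hab => (hcross a a.2 b hb hab).imp (Subtype.ext ·.1) (Subtype.ext ·.1)
  rw [Set.union_comm] at hcut3
  have h2 := hcut3.isKEdgeCut_induce_sup_edge hDisj.symm (Set.toFinite _)
    (Set.singleton_nonempty _) (Set.insert_nonempty _ _) (w₁ := ⟨v1, hv1⟩) (w₂ := ⟨v2, hv2⟩)
    (fun h => hvv (congrArg Subtype.val h)) hnadj2 fun a b hb hab => by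
      have hb1 : b ∈ S1 := (hUnion ▸ Set.mem_univ b : b ∈ S1 ∪ S2).resolve_right hb
      exact (hcross b hb1 a (Set.disjoint_right.1 hDisj a.2) hab.symm).imp
        (Subtype.ext ·.2) (Subtype.ext ·.2)
  rw [Set.ncard_pair hf12, Set.insert_union, Set.singleton_union] at h1
  rw [Set.ncard_singleton, Set.singleton_union] at h2
  exact ⟨h2, h1⟩

/-- If `{f1, f2, f3}` is a `3`-edge-cut of `G` with `f1, f2` edges of `H1` and
`f3` an edge of `H2`, then `{f3, e'2}` is a `2`-edge-cut of `G2` and `{f1, f2, e'1}` is a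
`3`-edge-cut of `G1`. -/
theorem reduction_split_three_cut {V : Type*} [Fintype V] [DecidableEq V] (G : SimpleGraph V)
    (hconn : G.Connected) (hbl : Bridgeless G) (hcub : IsCubic G)
    (u1 v1 u2 v2 : V)
    (he1 : G.Adj u1 v1) (he2 : G.Adj u2 v2)
    (hcut : IsKEdgeCut G 2 {s(u1, v1), s(u2, v2)})
    (S1 S2 : Set V)
    (hS1 : S1 = {x | (G.deleteEdges {s(u1, v1), s(u2, v2)}).Reachable u1 x})
    (hS2 : S2 = {x | (G.deleteEdges {s(u1, v1), s(u2, v2)}).Reachable v1 x})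
    (hu1 : u1 ∈ S1) (hu2 : u2 ∈ S1) (hv1 : v1 ∈ S2) (hv2 : v2 ∈ S2)
    (hUnion : S1 ∪ S2 = Set.univ) (hDisj : Disjoint S1 S2)
    (huu : u1 ≠ u2) (hvv : v1 ≠ v2)
    (hnadj1 : ¬ G.Adj u1 u2) (hnadj2 : ¬ G.Adj v1 v2)
    (f1 f2 : Sym2 ↥S1) (f3 : Sym2 ↥S2)
    (hf1 : f1 ∈ (G.induce S1).edgeSet) (hf2 : f2 ∈ (G.induce S1).edgeSet)
    (hf3 : f3 ∈ (G.induce S2).edgeSet)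
    (hcut3 : IsKEdgeCut G 3 {f1.map Subtype.val, f2.map Subtype.val, f3.map Subtype.val}) :
    ∀ (G1 : SimpleGraph ↥S1) (G2 : SimpleGraph ↥S2),
      G1 = G.induce S1 ⊔ fromEdgeSet {s((⟨u1, hu1⟩ : ↥S1), (⟨u2, hu2⟩ : ↥S1))} →
      G2 = G.induce S2 ⊔ fromEdgeSet {s((⟨v1, hv1⟩ : ↥S2), (⟨v2, hv2⟩ : ↥S2))} →
      IsKEdgeCut G2 2 {f3, s((⟨v1, hv1⟩ : ↥S2), (⟨v2, hv2⟩ : ↥S2))} ∧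
      IsKEdgeCut G1 3 {f1, f2, s((⟨u1, hu1⟩ : ↥S1), (⟨u2, hu2⟩ : ↥S1))} :=
  reduction_split_three_cut_general G u1 v1 u2 v2 S1 S2 hS1 hu1 hu2 hv1 hv2 hUnion hDisj huu hvv
    hnadj1 hnadj2 f1 f2 f3 hcut3
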